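/- Let f : ∂D → ℝ be 1-Lipschitz (take Λ₀ = ∂D) and generic in the sense that f₋(x) < f₊(x) for every x ∈ D. Then there exists g : D̄ → ℝ such that g = f on ∂D, |g(x) − g(y)| ≤ d(x,y) for all x, y ∈ D̄, and |g(x) − g(y)| < d(x,y) for all distinct x, y ∈ D. (The paper's proposition: every generic achronal topological circle of Ein₂ is the boundary of a spacelike surface in AdS; the content is the existence of a contracting extension of f strictly between f₋ and f₊.) -/

import Mathlib

open scoped RealInnerProductSpace

/-- The closed hemisphere `D̄ = {x ∈ S² : ⟪x,e⟫ ≥ 0}`. -/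
def closedHemi (e : EuclideanSpace ℝ (Fin 3)) : Set (EuclideanSpace ℝ (Fin 3)) :=
  {x | ‖x‖ = 1 ∧ 0 ≤ ⟪x, e⟫}

/-- The open hemisphere `D = {x ∈ S² : ⟪x,e⟫ > 0}`. -/
def openHemi (e : EuclideanSpace ℝ (Fin 3)) : Set (EuclideanSpace ℝ (Fin 3)) :=
  {x | ‖x‖ = 1 ∧ 0 < ⟪x, e⟫}

/-- The equatorial circle `∂D = {x ∈ S² : ⟪x,e⟫ = 0}`. -/
def equator (e : EuclideanSpace ℝ (Fin 3)) : Set (EuclideanSpace ℝ (Fin 3)) :=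
  {x | ‖x‖ = 1 ∧ ⟪x, e⟫ = 0}

/-- `f₋(x) = sup_{z ∈ Λ₀} (f z - d(x,z))`. -/
noncomputable def lowerEnv (Λ₀ : Set (EuclideanSpace ℝ (Fin 3)))
    (f : EuclideanSpace ℝ (Fin 3) → ℝ) (x : EuclideanSpace ℝ (Fin 3)) : ℝ :=
  sSup ((fun z => f z - Real.arccos ⟪x, z⟫) '' Λ₀)

/-- `f₊(x) = inf_{z ∈ Λ₀} (f z + d(x,z))`. -/
noncomputable def upperEnv (Λ₀ : Set (EuclideanSpace ℝ (Fin 3)))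
    (f : EuclideanSpace ℝ (Fin 3) → ℝ) (x : EuclideanSpace ℝ (Fin 3)) : ℝ :=
  sInf ((fun z => f z + Real.arccos ⟪x, z⟫) '' Λ₀)

/-!
Give `D̄ × ℝ` the Lorentzian metric `dt² - dθ²`, `θ` the spherical distance. How far `(x, t)` lies
in the future of the graph of `f₋` is measured by `sup_y ((t - f₋ y)₊² - θ(x, y)²)`, and
symmetrically how far it lies in the past of the graph of `f₊`. Both quantities are convex, hence
continuous, in `t`, so at the least `t` where the second no longer exceeds the first they balance;
this level is `g x`. If `(x, g x)` lay in the causal future of `(y, g y)` with `x ≠ y`, the first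
quantity would strictly increase from `y` to `x` as soon as it is positive at `y`, and the second
would strictly decrease (a reverse triangle inequality), contradicting balance at both ends. So `g`
is `1`-Lipschitz, and contracting where `f₋ < f₊` because the balanced value is positive there.
On `∂D` we have `f₋ = f = f₊`, which forces `g = f`.
-/

open InnerProductGeometry Metric Set Real

/-- With `a = t - φ z` and `b = θ(y, z)`, raising the base point by `Δ` while moving it by `δ ≤ Δ`
multiplies `a² - b²` by at least `1 + 2δ/K`. -/
lemma sq_sub_sq_mul_le {a b b' δ Δ K : ℝ} (hb : 0 ≤ b) (hba : b ≤ a) (hδ : 0 ≤ δ)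
    (hδΔ : δ ≤ Δ) (hb' : 0 ≤ b') (hb'b : b' ≤ δ + b) (hK : 0 < K) (habK : a + b ≤ K) :
    (a ^ 2 - b ^ 2) * (1 + 2 * δ / K) ≤ (a + Δ) ^ 2 - b' ^ 2 := by
  have hfrac : (a + b) / K ≤ 1 := (div_le_one hK).mpr habK
  calc (a ^ 2 - b ^ 2) * (1 + 2 * δ / K)
      = a ^ 2 - b ^ 2 + 2 * δ * (a - b) * ((a + b) / K) := by field_simp; ring
    _ ≤ a ^ 2 - b ^ 2 + 2 * δ * (a - b) := by
      nlinarith [mul_nonneg hδ (sub_nonneg.mpr hba)]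
    _ = (a + δ) ^ 2 - (δ + b) ^ 2 := by ring
    _ ≤ (a + Δ) ^ 2 - b' ^ 2 := by nlinarith

lemma convexOn_sq_max_zero : ConvexOn ℝ univ (fun u : ℝ => max u 0 ^ 2) := by
  refine ⟨convex_univ, fun u _ v _ a b ha hb hab => ?_⟩
  simp only [smul_eq_mul]
  have hu := le_max_left u 0
  have hv := le_max_left v 0
  have hu0 := le_max_right u 0
  have hv0 := le_max_right v 0
  have hle : max (a * u + b * v) 0 ≤ a * max u 0 + b * max v 0 :=
    max_le (by nlinarith) (by positivity)
  have hnn : 0 ≤ max (a * u + b * v) 0 := le_max_right _ _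
  calc max (a * u + b * v) 0 ^ 2 ≤ (a * max u 0 + b * max v 0) ^ 2 := by gcongr
    _ = a * max u 0 ^ 2 + b * max v 0 ^ 2 - a * b * (max u 0 - max v 0) ^ 2 := by
      obtain rfl : b = 1 - a := by linarith
      ring
    _ ≤ a * max u 0 ^ 2 + b * max v 0 ^ 2 := by nlinarith [mul_nonneg ha hb]

lemma apply_sInf_setOf_le_eq {f g : ℝ → ℝ} (hf : Continuous f) (hg : Continuous g)
    (hne : {t | f t ≤ g t}.Nonempty) (hbdd : BddBelow {t | f t ≤ g t}) :
    f (sInf {t | f t ≤ g t}) = g (sInf {t | f t ≤ g t}) := by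
  set a := sInf {t | f t ≤ g t}
  have hle : f a ≤ g a := (isClosed_le hf hg).csInf_mem hne hbdd
  have hIio : Iio a ⊆ {t | g t ≤ f t} := fun t ht =>
    show g t ≤ f t from le_of_not_ge (notMem_of_lt_csInf (s := {t | f t ≤ g t}) ht hbdd)
  have hge : g a ≤ f a :=
    closure_minimal hIio (isClosed_le hg hf) (by rw [closure_Iio]; exact self_mem_Iic)
  exact le_antisymm hle hge

section InnerProductSpace

variable {V : Type*} [NormedAddCommGroup V] [InnerProductSpace ℝ V]

lemma arccos_inner_eq_angle {x y : V} (hx : ‖x‖ = 1) (hy : ‖y‖ = 1) :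
    arccos ⟪x, y⟫ = angle x y := by
  simp [angle, hx, hy]

lemma angle_pos_of_ne {x y : V} (hx : ‖x‖ = 1) (hy : ‖y‖ = 1) (hxy : x ≠ y) :
    0 < angle x y := by
  rw [← arccos_inner_eq_angle hx hy, arccos_pos]
  exact lt_of_le_of_ne (real_inner_le_norm x y |>.trans (by simp [hx, hy]))
    (mt (inner_eq_one_iff_of_norm_eq_one hx hy).mp hxy)

/-- By `angle_comm` this is `|φ x - φ y| ≤ angle x y` on `S`. -/
def AngleLipschitzOn (S : Set V) (φ : V → ℝ) : Prop :=
  ∀ x ∈ S, ∀ y ∈ S, φ x ≤ φ y + angle x y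

namespace AngleLipschitzOn

variable {S T : Set V} {φ : V → ℝ}

lemma mono (hφ : AngleLipschitzOn S φ) (hTS : T ⊆ S) : AngleLipschitzOn T φ :=
  fun x hx y hy => hφ x (hTS hx) y (hTS hy)

lemma neg (hφ : AngleLipschitzOn S φ) : AngleLipschitzOn S (-φ) := fun x hx y hy => by
  have := hφ y hy x hx
  rw [angle_comm] at this
  simp only [Pi.neg_apply]
  linarith

lemma bddBelow_image (hφ : AngleLipschitzOn S φ) : BddBelow (φ '' S) := by
  rcases S.eq_empty_or_nonempty with rfl | ⟨s, hs⟩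
  · simp
  refine ⟨φ s - π, ?_⟩
  rintro _ ⟨y, hy, rfl⟩
  linarith [hφ s hs y hy, angle_le_pi s y]

lemma bddAbove_image (hφ : AngleLipschitzOn S φ) : BddAbove (φ '' S) := by
  simpa [← image_neg_eq_neg, image_image] using hφ.neg.bddBelow_image.neg

end AngleLipschitzOn

section LorentzSeparation

variable {S : Set V} {φ : V → ℝ} {x y : V} {t : ℝ}

/-- Positive exactly when `(x, t)` lies in the chronological future of the graph of `φ` over `S`
for the metric `dt² - dθ²`; it is then the largest squared Lorentzian distance to that graph. -/
noncomputable def lorentzSepSq (S : Set V) (φ : V → ℝ) (x : V) (t : ℝ) : ℝ :=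
  sSup ((fun y => max (t - φ y) 0 ^ 2 - angle x y ^ 2) '' S)

lemma bddAbove_lorentzSepSq (hφ : BddBelow (φ '' S)) (x : V) (t : ℝ) :
    BddAbove ((fun y => max (t - φ y) 0 ^ 2 - angle x y ^ 2) '' S) := by
  obtain ⟨c, hc⟩ := hφ
  refine ⟨max (t - c) 0 ^ 2, ?_⟩
  rintro _ ⟨y, hy, rfl⟩
  have : max (t - φ y) 0 ≤ max (t - c) 0 := by
    gcongr
    exact hc (mem_image_of_mem φ hy)
  have := le_max_right (t - φ y) 0
  nlinarith [sq_nonneg (angle x y)]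

lemma le_lorentzSepSq (hφ : BddBelow (φ '' S)) (hy : y ∈ S) :
    max (t - φ y) 0 ^ 2 - angle x y ^ 2 ≤ lorentzSepSq S φ x t :=
  le_csSup (bddAbove_lorentzSepSq hφ x t) (mem_image_of_mem _ hy)

lemma sq_le_lorentzSepSq (hS : S ⊆ sphere 0 1) (hφ : BddBelow (φ '' S)) (hx : x ∈ S) :
    max (t - φ x) 0 ^ 2 ≤ lorentzSepSq S φ x t := by
  simpa [angle_self (ne_zero_of_mem_unit_sphere ⟨x, hS hx⟩)] using
    le_lorentzSepSq (x := x) (t := t) hφ hx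

lemma lorentzSepSq_nonneg (hS : S ⊆ sphere 0 1) (hφ : BddBelow (φ '' S)) (hx : x ∈ S) :
    0 ≤ lorentzSepSq S φ x t :=
  (sq_nonneg _).trans (sq_le_lorentzSepSq hS hφ hx)

lemma lorentzSepSq_nonpos (hS : S.Nonempty) (h : ∀ y ∈ S, t - φ y ≤ angle x y) :
    lorentzSepSq S φ x t ≤ 0 := by
  refine csSup_le (hS.image _) ?_
  rintro _ ⟨y, hy, rfl⟩
  have := max_le (h y hy) (angle_nonneg x y)
  have := le_max_right (t - φ y) 0
  simp only [sub_nonpos]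
  gcongr

lemma convexOn_lorentzSepSq (hS : S.Nonempty) (hφ : BddBelow (φ '' S)) (x : V) :
    ConvexOn ℝ univ (lorentzSepSq S φ x) := by
  refine ⟨convex_univ, fun s _ t _ a b ha hb hab => ?_⟩
  refine csSup_le (hS.image _) ?_
  rintro _ ⟨y, hy, rfl⟩
  have hs := le_lorentzSepSq (x := x) (t := s) hφ hy
  have ht := le_lorentzSepSq (x := x) (t := t) hφ hy
  have hconv := convexOn_sq_max_zero.2 (mem_univ (s - φ y)) (mem_univ (t - φ y)) ha hb hab
  simp only [smul_eq_mul] at hconv ⊢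
  have hlin : a * s + b * t - φ y = a * (s - φ y) + b * (t - φ y) := by
    linear_combination φ y * hab
  rw [hlin]
  nlinarith

lemma continuous_lorentzSepSq (hS : S.Nonempty) (hφ : BddBelow (φ '' S)) (x : V) :
    Continuous (lorentzSepSq S φ x) :=
  continuousOn_univ.mp ((convexOn_lorentzSepSq hS hφ x).continuousOn isOpen_univ)

lemma lorentzSepSq_lt_of_angle_le_sub (hS : S ⊆ sphere 0 1) (hφ : BddBelow (φ '' S))
    (hx : x ∈ S) {tx ty : ℝ} (hxy : 0 < angle x y) (hcausal : angle x y ≤ tx - ty)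
    (hpos : 0 < lorentzSepSq S φ y ty) :
    lorentzSepSq S φ y ty < lorentzSepSq S φ x tx := by
  obtain ⟨c, hc⟩ := hφ
  set K := |ty - c| + π + 1
  have hK : 0 < K := by positivity
  set κ := 1 + 2 * angle x y / K
  have hκ : 1 < κ := by have := div_pos (mul_pos two_pos hxy) hK; linarith
  suffices lorentzSepSq S φ y ty ≤ lorentzSepSq S φ x tx / κ by
    rw [le_div_iff₀ (by linarith)] at this
    nlinarith
  refine csSup_le (nonempty_of_mem hx |>.image _) ?_
  rintro _ ⟨z, hz, rfl⟩
  rw [le_div_iff₀ (by linarith)]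
  dsimp only
  by_cases hzy : angle y z < ty - φ z
  · have hcz : c ≤ φ z := hc (mem_image_of_mem φ hz)
    have hgain := sq_sub_sq_mul_le (angle_nonneg y z) hzy.le (angle_nonneg x y) hcausal
      (angle_nonneg x z) (angle_le_angle_add_angle x y z) hK
      (by linarith [le_abs_self (ty - c), angle_le_pi y z])
    have hz' := le_lorentzSepSq (x := x) (t := tx) ⟨c, hc⟩ hz
    rw [max_eq_left (by linarith [angle_nonneg y z])]
    rw [max_eq_left (by linarith [angle_nonneg y z])] at hz'
    calc _ ≤ (ty - φ z + (tx - ty)) ^ 2 - angle x z ^ 2 := hgain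
      _ = (tx - φ z) ^ 2 - angle x z ^ 2 := by ring
      _ ≤ _ := hz'
  · have hle : max (ty - φ z) 0 ≤ angle y z := max_le (not_lt.mp hzy) (angle_nonneg y z)
    have hnonpos : max (ty - φ z) 0 ^ 2 - angle y z ^ 2 ≤ 0 := by
      simp only [sub_nonpos]; gcongr
    nlinarith [lorentzSepSq_nonneg (t := tx) hS ⟨c, hc⟩ hx]

end LorentzSeparation

section Equidistant

variable {S : Set V} {φ ψ : V → ℝ} {x y : V} {t : ℝ}

/-- `lorentzSepSq S (-ψ) x (-t)` is the separation of `(x, t)` from the graph of `ψ` with time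
reversed, i.e. how far `(x, t)` lies in the past of that graph. -/
def balanceSet (S : Set V) (φ ψ : V → ℝ) (x : V) : Set ℝ :=
  {t | lorentzSepSq S (-ψ) x (-t) ≤ lorentzSepSq S φ x t}

noncomputable def equidistantLevel (S : Set V) (φ ψ : V → ℝ) (x : V) : ℝ :=
  sInf (balanceSet S φ ψ x)

variable (hS : S ⊆ sphere 0 1) (hφ : AngleLipschitzOn S φ) (hψ : AngleLipschitzOn S ψ)
include hS hφ hψ

lemma mem_balanceSet_upper (hx : x ∈ S) : ψ x ∈ balanceSet S φ ψ x := by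
  refine le_trans (lorentzSepSq_nonpos (nonempty_of_mem hx) fun y hy => ?_)
    (lorentzSepSq_nonneg hS hφ.bddBelow_image hx)
  have := hψ y hy x hx
  rw [angle_comm] at this
  simp only [Pi.neg_apply]
  linarith

lemma le_of_mem_balanceSet (hx : x ∈ S) (hφψ : φ x ≤ ψ x) (ht : t ∈ balanceSet S φ ψ x) :
    φ x ≤ t := by
  by_contra! htx
  have hpast : lorentzSepSq S φ x t ≤ 0 :=
    lorentzSepSq_nonpos (nonempty_of_mem hx) fun y hy => by linarith [hφ x hx y hy]
  have hfuture := sq_le_lorentzSepSq (t := -t) hS hψ.neg.bddBelow_image hx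
  rw [Pi.neg_apply, max_eq_left (by linarith)] at hfuture
  have ht' : lorentzSepSq S (-ψ) x (-t) ≤ lorentzSepSq S φ x t := ht
  nlinarith

lemma bddBelow_balanceSet (hx : x ∈ S) (hφψ : φ x ≤ ψ x) : BddBelow (balanceSet S φ ψ x) :=
  ⟨φ x, fun _ => le_of_mem_balanceSet hS hφ hψ hx hφψ⟩

lemma le_equidistantLevel (hx : x ∈ S) (hφψ : φ x ≤ ψ x) : φ x ≤ equidistantLevel S φ ψ x :=
  le_csInf ⟨_, mem_balanceSet_upper hS hφ hψ hx⟩ fun _ => le_of_mem_balanceSet hS hφ hψ hx hφψ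

lemma equidistantLevel_le (hx : x ∈ S) (hφψ : φ x ≤ ψ x) : equidistantLevel S φ ψ x ≤ ψ x :=
  csInf_le (bddBelow_balanceSet hS hφ hψ hx hφψ) (mem_balanceSet_upper hS hφ hψ hx)

lemma equidistantLevel_eq_of_eq (hx : x ∈ S) (hφψ : φ x = ψ x) :
    equidistantLevel S φ ψ x = φ x :=
  le_antisymm (hφψ ▸ equidistantLevel_le hS hφ hψ hx hφψ.le)
    (le_equidistantLevel hS hφ hψ hx hφψ.le)

lemma lorentzSepSq_equidistantLevel (hx : x ∈ S) (hφψ : φ x ≤ ψ x) :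
    lorentzSepSq S (-ψ) x (-equidistantLevel S φ ψ x) =
      lorentzSepSq S φ x (equidistantLevel S φ ψ x) :=
  apply_sInf_setOf_le_eq
    ((continuous_lorentzSepSq (nonempty_of_mem hx) hψ.neg.bddBelow_image x).comp continuous_neg)
    (continuous_lorentzSepSq (nonempty_of_mem hx) hφ.bddBelow_image x)
    ⟨_, mem_balanceSet_upper hS hφ hψ hx⟩ (bddBelow_balanceSet hS hφ hψ hx hφψ)

lemma lorentzSepSq_equidistantLevel_pos (hx : x ∈ S) (hφψ : φ x < ψ x) :
    0 < lorentzSepSq S φ x (equidistantLevel S φ ψ x) := by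
  set g := equidistantLevel S φ ψ x
  rcases (le_equidistantLevel hS hφ hψ hx hφψ.le).lt_or_eq with hlt | heq
  · have := sq_le_lorentzSepSq (t := g) hS hφ.bddBelow_image hx
    rw [max_eq_left (by linarith)] at this
    nlinarith
  · have := sq_le_lorentzSepSq (t := -g) hS hψ.neg.bddBelow_image hx
    rw [Pi.neg_apply, max_eq_left (by linarith),
      lorentzSepSq_equidistantLevel hS hφ hψ hx hφψ.le] at this
    nlinarith

lemma equidistantLevel_sub_lt_angle (hx : x ∈ S) (hy : y ∈ S) (hφψx : φ x ≤ ψ x)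
    (hφψy : φ y ≤ ψ y) (hxy : 0 < angle x y)
    (hpos : 0 < lorentzSepSq S φ y (equidistantLevel S φ ψ y)) :
    equidistantLevel S φ ψ x - equidistantLevel S φ ψ y < angle x y := by
  by_contra! hcausal
  have hpast := lorentzSepSq_lt_of_angle_le_sub hS hφ.bddBelow_image hx hxy hcausal hpos
  rw [← lorentzSepSq_equidistantLevel hS hφ hψ hx hφψx] at hpast
  have hfuture := lorentzSepSq_lt_of_angle_le_sub hS hψ.neg.bddBelow_image hy
    (tx := -equidistantLevel S φ ψ y) (by rwa [angle_comm]) (by rw [angle_comm]; linarith)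
    (hpos.trans hpast)
  rw [lorentzSepSq_equidistantLevel hS hφ hψ hy hφψy] at hfuture
  exact lt_asymm hpast hfuture

lemma equidistantLevel_sub_le_angle (hx : x ∈ S) (hy : y ∈ S) (hφψx : φ x ≤ ψ x)
    (hφψy : φ y ≤ ψ y) : equidistantLevel S φ ψ x - equidistantLevel S φ ψ y ≤ angle x y := by
  rcases eq_or_ne x y with rfl | hxy
  · simp [angle_nonneg]
  rcases lt_or_ge 0 (lorentzSepSq S φ y (equidistantLevel S φ ψ y)) with hpos | hnonpos
  · exact (equidistantLevel_sub_lt_angle hS hφ hψ hx hy hφψx hφψy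
      (angle_pos_of_ne (mem_sphere_zero_iff_norm.mp (hS hx))
        (mem_sphere_zero_iff_norm.mp (hS hy)) hxy) hpos).le
  · have hψy : ψ y ≤ equidistantLevel S φ ψ y := by
      by_contra! hlt
      have := sq_le_lorentzSepSq (t := -equidistantLevel S φ ψ y) hS hψ.neg.bddBelow_image hy
      rw [Pi.neg_apply, max_eq_left (by linarith),
        lorentzSepSq_equidistantLevel hS hφ hψ hy hφψy] at this
      nlinarith
    linarith [equidistantLevel_le hS hφ hψ hx hφψx, hψ x hx y hy]

lemma abs_equidistantLevel_sub_le (hφψ : ∀ z ∈ S, φ z ≤ ψ z) (hx : x ∈ S) (hy : y ∈ S) :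
    |equidistantLevel S φ ψ x - equidistantLevel S φ ψ y| ≤ angle x y :=
  abs_sub_le_iff.mpr
    ⟨equidistantLevel_sub_le_angle hS hφ hψ hx hy (hφψ x hx) (hφψ y hy),
      angle_comm x y ▸ equidistantLevel_sub_le_angle hS hφ hψ hy hx (hφψ y hy) (hφψ x hx)⟩

lemma abs_equidistantLevel_sub_lt (hx : x ∈ S) (hy : y ∈ S) (hφψx : φ x < ψ x)
    (hφψy : φ y < ψ y) (hxy : x ≠ y) :
    |equidistantLevel S φ ψ x - equidistantLevel S φ ψ y| < angle x y := by
  have hangle := angle_pos_of_ne (mem_sphere_zero_iff_norm.mp (hS hx))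
    (mem_sphere_zero_iff_norm.mp (hS hy)) hxy
  refine abs_sub_lt_iff.mpr ⟨?_, ?_⟩
  · exact equidistantLevel_sub_lt_angle hS hφ hψ hx hy hφψx.le hφψy.le hangle
      (lorentzSepSq_equidistantLevel_pos hS hφ hψ hy hφψy)
  · rw [angle_comm] at hangle ⊢
    exact equidistantLevel_sub_lt_angle hS hφ hψ hy hx hφψy.le hφψx.le hangle
      (lorentzSepSq_equidistantLevel_pos hS hφ hψ hx hφψx)

end Equidistant

end InnerProductSpace

section Envelopes

variable {Λ : Set (EuclideanSpace ℝ (Fin 3))} {f : EuclideanSpace ℝ (Fin 3) → ℝ}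
  {x : EuclideanSpace ℝ (Fin 3)}

lemma upperEnv_eq_neg_lowerEnv_neg : upperEnv Λ f = -lowerEnv Λ (-f) := by
  ext x
  rw [upperEnv, Real.sInf_def, Pi.neg_apply, lowerEnv, ← image_neg_eq_neg, image_image]
  simp only [Pi.neg_apply, neg_add']

lemma bddAbove_lowerEnv_image (hf : AngleLipschitzOn Λ f) (x : EuclideanSpace ℝ (Fin 3)) :
    BddAbove ((fun z => f z - arccos ⟪x, z⟫) '' Λ) := by
  obtain ⟨c, hc⟩ := hf.bddAbove_image
  refine ⟨c, ?_⟩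
  rintro _ ⟨z, hz, rfl⟩
  linarith [hc (mem_image_of_mem f hz), arccos_nonneg ⟪x, z⟫]

variable (hΛ : Λ ⊆ sphere 0 1) (hf : AngleLipschitzOn Λ f)
include hΛ hf

lemma lowerEnv_eq_of_mem (hx : x ∈ Λ) : lowerEnv Λ f x = f x := by
  have hx1 := mem_sphere_zero_iff_norm.mp (hΛ hx)
  refine le_antisymm (csSup_le (nonempty_of_mem hx |>.image _) ?_) ?_
  · rintro _ ⟨z, hz, rfl⟩
    dsimp only
    rw [arccos_inner_eq_angle hx1 (mem_sphere_zero_iff_norm.mp (hΛ hz)), angle_comm]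
    linarith [hf z hz x hx]
  · have := le_csSup (bddAbove_lowerEnv_image hf x) (mem_image_of_mem _ hx)
    rwa [arccos_inner_eq_angle hx1 hx1, angle_self (ne_zero_of_mem_unit_sphere ⟨x, hΛ hx⟩),
      sub_zero] at this

lemma upperEnv_eq_of_mem (hx : x ∈ Λ) : upperEnv Λ f x = f x := by
  rw [upperEnv_eq_neg_lowerEnv_neg, Pi.neg_apply, lowerEnv_eq_of_mem hΛ hf.neg hx, Pi.neg_apply,
    neg_neg]

lemma angleLipschitzOn_lowerEnv : AngleLipschitzOn (sphere 0 1) (lowerEnv Λ f) := by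
  intro x hx y hy
  rcases Λ.eq_empty_or_nonempty with rfl | hne
  · simp [lowerEnv, angle_nonneg]
  have hx1 := mem_sphere_zero_iff_norm.mp hx
  have hy1 := mem_sphere_zero_iff_norm.mp hy
  refine csSup_le (hne.image _) ?_
  rintro _ ⟨z, hz, rfl⟩
  have hz1 := mem_sphere_zero_iff_norm.mp (hΛ hz)
  have : f z - arccos ⟪y, z⟫ ≤ lowerEnv Λ f y :=
    le_csSup (bddAbove_lowerEnv_image hf y) (mem_image_of_mem _ hz)
  simp only [arccos_inner_eq_angle hx1 hz1, arccos_inner_eq_angle hy1 hz1] at this ⊢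
  linarith [angle_le_angle_add_angle y x z, angle_comm x y]

lemma angleLipschitzOn_upperEnv : AngleLipschitzOn (sphere 0 1) (upperEnv Λ f) := by
  rw [upperEnv_eq_neg_lowerEnv_neg]
  exact (angleLipschitzOn_lowerEnv hΛ hf.neg).neg

lemma lowerEnv_le_upperEnv (hx : x ∈ sphere 0 1) : lowerEnv Λ f x ≤ upperEnv Λ f x := by
  rcases Λ.eq_empty_or_nonempty with rfl | hne
  · simp [lowerEnv, upperEnv]
  have hx1 := mem_sphere_zero_iff_norm.mp hx
  refine csSup_le (hne.image _) ?_
  rintro _ ⟨z, hz, rfl⟩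
  refine le_csInf (hne.image _) ?_
  rintro _ ⟨w, hw, rfl⟩
  simp only [arccos_inner_eq_angle hx1 (mem_sphere_zero_iff_norm.mp (hΛ hz)),
    arccos_inner_eq_angle hx1 (mem_sphere_zero_iff_norm.mp (hΛ hw))]
  linarith [hf z hz w hw, angle_le_angle_add_angle z x w, angle_comm x z]

end Envelopes

theorem generic_circle_bounds_spacelike_surface_general (e : EuclideanSpace ℝ (Fin 3))
    (f : EuclideanSpace ℝ (Fin 3) → ℝ)
    (hLip : ∀ x ∈ equator e, ∀ y ∈ equator e, |f x - f y| ≤ Real.arccos ⟪x, y⟫)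
    (hgen : ∀ x ∈ openHemi e, lowerEnv (equator e) f x < upperEnv (equator e) f x) :
    ∃ g : EuclideanSpace ℝ (Fin 3) → ℝ,
      (∀ x ∈ equator e, g x = f x) ∧
      (∀ x ∈ closedHemi e, ∀ y ∈ closedHemi e, |g x - g y| ≤ Real.arccos ⟪x, y⟫) ∧
      (∀ x ∈ openHemi e, ∀ y ∈ openHemi e, x ≠ y →
        |g x - g y| < Real.arccos ⟪x, y⟫) := by
  have hS : closedHemi e ⊆ sphere 0 1 := fun x hx => mem_sphere_zero_iff_norm.mpr hx.1
  have hΛ : equator e ⊆ sphere 0 1 := fun x hx => mem_sphere_zero_iff_norm.mpr hx.1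
  have hf : AngleLipschitzOn (equator e) f := fun x hx y hy => by
    have := (abs_le.mp (hLip x hx y hy)).2
    rw [arccos_inner_eq_angle hx.1 hy.1] at this
    linarith
  have hφ := (angleLipschitzOn_lowerEnv hΛ hf).mono hS
  have hψ := (angleLipschitzOn_upperEnv hΛ hf).mono hS
  have hopen : openHemi e ⊆ closedHemi e := fun x hx => ⟨hx.1, hx.2.le⟩
  refine ⟨equidistantLevel (closedHemi e) (lowerEnv (equator e) f) (upperEnv (equator e) f),
    fun x hx => ?_, fun x hx y hy => ?_, fun x hx y hy hxy => ?_⟩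
  · rw [equidistantLevel_eq_of_eq hS hφ hψ ⟨hx.1, hx.2.ge⟩
      ((upperEnv_eq_of_mem hΛ hf hx).symm ▸ lowerEnv_eq_of_mem hΛ hf hx)]
    exact lowerEnv_eq_of_mem hΛ hf hx
  · rw [arccos_inner_eq_angle hx.1 hy.1]
    exact abs_equidistantLevel_sub_le hS hφ hψ
      (fun z hz => lowerEnv_le_upperEnv hΛ hf (hS hz)) hx hy
  · rw [arccos_inner_eq_angle hx.1 hy.1]
    exact abs_equidistantLevel_sub_lt hS hφ hψ (hopen hx) (hopen hy) (hgen x hx) (hgen y hy)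
      hxy

/-- Every generic achronal topological circle of `Ein₂` — the graph
of a `1`-Lipschitz map `f : ∂D → ℝ` with `f₋ < f₊` on `D` — bounds a spacelike
surface in `AdS`: there is an extension `g` of `f` to the closed hemisphere which
is `1`-Lipschitz on `D̄` and contracting on `D`. -/
theorem generic_circle_bounds_spacelike_surface (e : EuclideanSpace ℝ (Fin 3))
    (he : ‖e‖ = 1) (f : EuclideanSpace ℝ (Fin 3) → ℝ)
    (hLip : ∀ x ∈ equator e, ∀ y ∈ equator e, |f x - f y| ≤ Real.arccos ⟪x, y⟫)
    (hgen : ∀ x ∈ openHemi e, lowerEnv (equator e) f x < upperEnv (equator e) f x) :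
    ∃ g : EuclideanSpace ℝ (Fin 3) → ℝ,
      (∀ x ∈ equator e, g x = f x) ∧
      (∀ x ∈ closedHemi e, ∀ y ∈ closedHemi e, |g x - g y| ≤ Real.arccos ⟪x, y⟫) ∧
      (∀ x ∈ openHemi e, ∀ y ∈ openHemi e, x ≠ y →
        |g x - g y| < Real.arccos ⟪x, y⟫) :=
  generic_circle_bounds_spacelike_surface_general e f hLip hgen
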